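/- Let V be a finite-dimensional completely solvable Lie algebra over a field k, i.e. there exists a chain of Lie ideals 0 = h_0 ⊆ h_1 ⊆ ⋯ ⊆ h_n = V of V with dim_k h_i = i for all i. Then every linear functional f ∈ V^* admits a polarization: there exists a Lie subalgebra h ⊆ V such that f(⁅x, y⁆) = 0 for all x, y ∈ h, and h is maximal with respect to inclusion among all linear subspaces W of V satisfying f(⁅x, y⁆) = 0 for all x, y ∈ W. -/

import Mathlib

/-!
Vergne's construction. Let `B(x, y) = f ⁅x, y⁆` and write `rad U = U ∩ U^⊥` for the radical of
`B` on a subspace `U`. For a complete flag of ideals `h₀ ⊆ ⋯ ⊆ hₙ`, the sum `Σᵢ rad hᵢ` is a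
polarization. Going up the flag one dimension at a time, the partial sum `H` stays Lagrangian in
`hᵢ`, i.e. `hᵢ ∩ H^⊥ = H`: either `rad hᵢ₊₁` leaves `hᵢ` and supplies the missing direction, or it
lies in `hᵢ`, and then the dimension formula `dim H + dim (U ∩ H^⊥) = dim U + dim (H ∩ U^⊥)`,
applied to `H ⊆ hᵢ` and to `H + kv ⊆ hᵢ₊₁` (isotropic because `B` is alternating), shows that no
`v ∈ hᵢ₊₁ ∩ H^⊥` lies outside `H`. Closure under the bracket comes from the Jacobi
identity, which gives `⁅rad U₁, rad U₂⁆ ⊆ rad U₁` for ideals `U₁ ⊆ U₂`.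
-/

open Module Submodule

theorem monotoneOn_nat_Iic_of_le_succ {α : Type*} [Preorder α] {f : ℕ → α} {n : ℕ}
    (hf : ∀ i < n, f i ≤ f (i + 1)) : MonotoneOn f (Set.Iic n) := by
  intro i _ j hj hij
  induction j, hij using Nat.le_induction with
  | base => exact le_rfl
  | succ j _ ih => exact (ih (Nat.le_of_succ_le hj)).trans (hf j hj)

namespace LinearMap.BilinForm

section CommSemiring

variable {R M : Type*} [CommSemiring R] [AddCommMonoid M] [Module R M] {B : LinearMap.BilinForm R M}

theorem orthogonal_sup (H K : Submodule R M) :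
    B.orthogonal (H ⊔ K) = B.orthogonal H ⊓ B.orthogonal K := by
  refine le_antisymm (le_inf (orthogonal_le le_sup_left) (orthogonal_le le_sup_right)) ?_
  rintro m ⟨hmH, hmK⟩ n hn
  obtain ⟨a, ha, b, hb, rfl⟩ := mem_sup.1 hn
  have ha' : B a m = 0 := hmH a ha
  have hb' : B b m = 0 := hmK b hb
  show B (a + b) m = 0
  simp [ha', hb']

theorem le_orthogonal_comm (hB : B.IsRefl) {H K : Submodule R M} :
    H ≤ B.orthogonal K ↔ K ≤ B.orthogonal H :=
  ⟨fun h x hx _ hy => hB _ _ (h hy x hx), fun h x hx _ hy => hB _ _ (h hy x hx)⟩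

theorem sup_le_orthogonal_sup (hB : B.IsRefl) {H K : Submodule R M}
    (hH : H ≤ B.orthogonal H) (hK : K ≤ B.orthogonal K) (hHK : H ≤ B.orthogonal K) :
    H ⊔ K ≤ B.orthogonal (H ⊔ K) := by
  rw [orthogonal_sup]
  exact sup_le (le_inf hH hHK) (le_inf ((le_orthogonal_comm hB).1 hHK) hK)

theorem span_singleton_le_orthogonal_self (hB : B.IsAlt) (v : M) :
    span R {v} ≤ B.orthogonal (span R {v}) := by
  refine span_le.2 (Set.singleton_subset_iff.2 fun n hn => ?_)
  obtain ⟨a, rfl⟩ := mem_span_singleton.1 hn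
  simp [hB.self_eq_zero]

variable (B) in
def radicalOn (U : Submodule R M) : Submodule R M :=
  U ⊓ B.orthogonal U

variable (B) in
def radicalSum (I : ℕ → Submodule R M) (n : ℕ) : Submodule R M :=
  ⨆ i ≤ n, B.radicalOn (I i)

theorem radicalOn_le_radicalSum (I : ℕ → Submodule R M) {i n : ℕ} (hi : i ≤ n) :
    B.radicalOn (I i) ≤ B.radicalSum I n :=
  le_iSup₂ (f := fun i (_ : i ≤ n) => B.radicalOn (I i)) i hi

end CommSemiring

variable {k V : Type*} [Field k] [AddCommGroup V] [Module k V] [FiniteDimensional k V]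
  {B : LinearMap.BilinForm k V}

theorem finrank_add_finrank_inf_orthogonal (hB : B.IsRefl) {U H : Submodule k V} (hHU : H ≤ U) :
    finrank k H + finrank k ↥(U ⊓ B.orthogonal H) =
      finrank k U + finrank k ↥(H ⊓ B.orthogonal U) := by
  have finrank_comap (X : Submodule k V) :
      finrank k (X.comap U.subtype) = finrank k ↥(U ⊓ X) := by
    rw [← finrank_map_subtype_eq, map_comap_subtype]
  have orthogonal_comap {X : Submodule k V} (hX : X ≤ U) :
      (B.restrict U).orthogonal (X.comap U.subtype) = (B.orthogonal X).comap U.subtype := by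
    ext x
    exact ⟨fun hx y hy => hx ⟨y, hX hy⟩ hy, fun hx y hy => hx y hy⟩
  have := finrank_add_finrank_orthogonal (B := B.restrict U) (fun x y => hB x y)
    (H.comap U.subtype)
  rwa [← comap_subtype_self U, orthogonal_comap hHU, orthogonal_comap le_rfl, ← comap_inf,
    finrank_comap, finrank_comap, finrank_comap, inf_eq_right.2 hHU, ← inf_assoc,
    inf_eq_right.2 hHU] at this

theorem inf_orthogonal_eq_of_radicalOn_le (hB : B.IsAlt) {U U' H : Submodule k V}
    (hUU' : U ≤ U') (hdim : finrank k U' ≤ finrank k U + 1) (hH : U ⊓ B.orthogonal H = H)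
    (hR : B.radicalOn U' ≤ U) :
    U' ⊓ B.orthogonal H = H := by
  have hHU : H ≤ U := hH.ge.trans inf_le_left
  have hHH : H ≤ B.orthogonal H := hH.ge.trans inf_le_right
  refine le_antisymm (fun v ⟨hvU', hvH⟩ => by_contra fun hvH' => ?_)
    (le_inf (hHU.trans hUU') hHH)
  set H' := H ⊔ span k {v}
  have hH'U' : H' ≤ U' := sup_le (hHU.trans hUU') ((span_singleton_le_iff_mem _ _).2 hvU')
  have hH'iso : H' ≤ U' ⊓ B.orthogonal H' :=
    le_inf hH'U' (sup_le_orthogonal_sup hB.isRefl hHH (span_singleton_le_orthogonal_self hB v)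
      ((le_orthogonal_comm hB.isRefl).2 ((span_singleton_le_iff_mem _ _).2 hvH)))
  have hlt : finrank k H < finrank k H' :=
    finrank_lt_finrank_of_lt (left_lt_sup.2 fun h => hvH' (h (mem_span_singleton_self v)))
  -- `H' ∩ U'^⊥ ⊆ rad U' ⊆ U ∩ H^⊥ = H`
  have hrad : finrank k ↥(H' ⊓ B.orthogonal U') ≤ finrank k ↥(H ⊓ B.orthogonal U) := by
    refine finrank_mono (le_inf ?_ (inf_le_right.trans (orthogonal_le hUU')))
    exact (le_inf ((inf_le_inf_right _ hH'U').trans hR)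
      (inf_le_right.trans (orthogonal_le (hHU.trans hUU')))).trans hH.le
  have e := finrank_add_finrank_inf_orthogonal hB.isRefl hHU
  have e' := finrank_add_finrank_inf_orthogonal hB.isRefl hH'U'
  have := finrank_mono hH'iso
  rw [hH] at e
  omega

theorem inf_orthogonal_sup_radicalOn_eq (hB : B.IsAlt) {U U' H : Submodule k V}
    (hUU' : U ≤ U') (hdim : finrank k U' ≤ finrank k U + 1) (hH : U ⊓ B.orthogonal H = H) :
    U' ⊓ B.orthogonal (H ⊔ B.radicalOn U') = H ⊔ B.radicalOn U' := by
  have hHU : H ≤ U := hH.ge.trans inf_le_left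
  have hRU' : B.radicalOn U' ≤ B.orthogonal U' := inf_le_right
  by_cases hR : B.radicalOn U' ≤ U
  · have hRH : B.radicalOn U' ≤ H :=
      (le_inf hR (hRU'.trans (orthogonal_le (hHU.trans hUU')))).trans hH.le
    rw [sup_eq_left.2 hRH]
    exact inf_orthogonal_eq_of_radicalOn_le hB hUU' hdim hH hR
  refine le_antisymm ?_ (le_inf (sup_le (hHU.trans hUU') inf_le_left)
    (sup_le_orthogonal_sup hB.isRefl (hH.ge.trans inf_le_right)
      (hRU'.trans (orthogonal_le inf_le_left))
      ((le_orthogonal_comm hB.isRefl).2 (hRU'.trans (orthogonal_le (hHU.trans hUU'))))))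
  rintro v ⟨hvU', hv⟩
  obtain ⟨e, heR, heU⟩ := SetLike.not_le_iff_exists.1 hR
  have hU' : U ⊔ span k {e} = U' := by
    refine eq_of_le_of_finrank_le (sup_le hUU' ((span_singleton_le_iff_mem _ _).2 heR.1)) ?_
    have hlt : U < U ⊔ span k {e} := left_lt_sup.2 fun h => heU (h (mem_span_singleton_self e))
    have := finrank_lt_finrank_of_lt hlt
    omega
  rw [← hU'] at hvU'
  obtain ⟨w, hw, _, hce, rfl⟩ := mem_sup.1 hvU'
  obtain ⟨c, rfl⟩ := mem_span_singleton.1 hce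
  have hwH : w ∈ H := by
    refine hH.le ⟨hw, fun x hx => ?_⟩
    have hxv : B x (w + c • e) = 0 := orthogonal_le le_sup_left hv x hx
    have hxe : B x e = 0 := heR.2 x (hUU' (hHU hx))
    simpa [hxe] using hxv
  exact add_mem (mem_sup_left hwH) (mem_sup_right (smul_mem _ _ heR))

theorem inf_orthogonal_radicalSum_eq (hB : B.IsAlt) {I : ℕ → Submodule k V} (h0 : I 0 = ⊥)
    {n : ℕ} (hmono : ∀ i < n, I i ≤ I (i + 1))
    (hdim : ∀ i < n, finrank k (I (i + 1)) ≤ finrank k (I i) + 1) :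
    I n ⊓ B.orthogonal (B.radicalSum I n) = B.radicalSum I n := by
  induction n with
  | zero => simp [radicalSum, radicalOn, h0]
  | succ n ih =>
    rw [radicalSum, Nat.iSup_le_succ]
    exact inf_orthogonal_sup_radicalOn_eq hB (hmono n n.lt_succ_self) (hdim n n.lt_succ_self)
      (ih (fun i hi => hmono i (hi.trans n.lt_succ_self))
        fun i hi => hdim i (hi.trans n.lt_succ_self))

end LinearMap.BilinForm

namespace LieAlgebra

open LinearMap.BilinForm

variable {R L : Type*} [CommRing R] [LieRing L] [LieAlgebra R L] (f : Module.Dual R L)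

def kirillovForm : LinearMap.BilinForm R L :=
  (LieModule.toEnd R L L : L →ₗ[R] Module.End R L).compr₂ f

@[simp]
theorem kirillovForm_apply (x y : L) : kirillovForm f x y = f ⁅x, y⁆ := rfl

theorem kirillovForm_isAlt : (kirillovForm f).IsAlt := fun x => by simp

theorem lie_mem_radicalOn {U₁ U₂ : LieIdeal R L} (hU : U₁ ≤ U₂) {b d : L}
    (hb : b ∈ (kirillovForm f).radicalOn U₁) (hd : d ∈ (kirillovForm f).radicalOn U₂) :
    ⁅b, d⁆ ∈ (kirillovForm f).radicalOn U₁ := by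
  refine ⟨lie_mem_left R L U₁ b d hb.1, fun z hz => ?_⟩
  have hzb : f ⁅⁅z, b⁆, d⁆ = 0 := hd.2 _ (hU (lie_mem_right R L U₁ z b hb.1))
  have hzd : f ⁅b, ⁅z, d⁆⁆ = 0 :=
    (kirillovForm_isAlt f).isRefl _ _ (hb.2 _ (lie_mem_left R L U₁ z d hz))
  show f ⁅z, ⁅b, d⁆⁆ = 0
  rw [leibniz_lie, map_add, hzb, hzd, add_zero]

theorem lie_mem_radicalSum {I : ℕ → LieIdeal R L} {n : ℕ} (hmono : ∀ i < n, I i ≤ I (i + 1))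
    {x y : L} (hx : x ∈ (kirillovForm f).radicalSum (fun i => (I i : Submodule R L)) n)
    (hy : y ∈ (kirillovForm f).radicalSum (fun i => (I i : Submodule R L)) n) :
    ⁅x, y⁆ ∈ (kirillovForm f).radicalSum (fun i => (I i : Submodule R L)) n := by
  have hI := monotoneOn_nat_Iic_of_le_succ hmono
  have hgen : ∀ i ≤ n, ∀ j ≤ n, ∀ a ∈ (kirillovForm f).radicalOn (I i : Submodule R L),
      ∀ b ∈ (kirillovForm f).radicalOn (I j : Submodule R L),
        ⁅a, b⁆ ∈ (kirillovForm f).radicalSum (fun i => (I i : Submodule R L)) n := by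
    intro i hi j hj a ha b hb
    rcases le_total i j with hij | hji
    · exact radicalOn_le_radicalSum _ hi (lie_mem_radicalOn f (hI hi hj hij) ha hb)
    · rw [← lie_skew]
      exact neg_mem (radicalOn_le_radicalSum _ hj (lie_mem_radicalOn f (hI hj hi hji) hb ha))
  refine (map₂_le (f := (LieModule.toEnd R L L : L →ₗ[R] Module.End R L))).1 ?_ x hx y hy
  simp only [radicalSum, map₂_iSup_left, map₂_iSup_right]
  exact iSup₂_le fun i hi => iSup₂_le fun j hj => map₂_le.2 (hgen j hj i hi)

end LieAlgebra

open LieAlgebra LinearMap.BilinForm in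
/-- Vergne's corollary: every linear functional on a finite-dimensional completely
solvable Lie algebra admits a polarization, i.e. a Lie subalgebra on which the
coboundary of `f` vanishes and which is maximal with respect to inclusion among all
linear subspaces with this property. -/
theorem completelySolvable_polarization_exists
    {k V : Type*} [Field k] [LieRing V] [LieAlgebra k V] [FiniteDimensional k V]
    (hcs : ∃ (n : ℕ) (I : ℕ → LieIdeal k V),
      I 0 = ⊥ ∧ I n = ⊤ ∧ (∀ i < n, I i ≤ I (i + 1)) ∧
      ∀ i ≤ n, Module.finrank k ↥(I i : Submodule k V) = i)
    (f : Module.Dual k V) :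
    ∃ h : LieSubalgebra k V,
      (∀ x ∈ h, ∀ y ∈ h, f ⁅x, y⁆ = 0) ∧
      ∀ W : Submodule k V, (∀ x ∈ W, ∀ y ∈ W, f ⁅x, y⁆ = 0) →
        h.toSubmodule ≤ W → W = h.toSubmodule := by
  obtain ⟨n, I, hI0, hIn, hmono, hdim⟩ := hcs
  set P := (kirillovForm f).radicalSum (fun i => (I i : Submodule k V)) n
  have hP : (kirillovForm f).orthogonal P = P := by
    have := inf_orthogonal_radicalSum_eq (kirillovForm_isAlt f)
      (I := fun i => (I i : Submodule k V)) (by simp [hI0]) (fun i hi => hmono i hi)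
      (fun i hi => by rw [hdim i hi.le, hdim (i + 1) hi])
    rwa [hIn, LieIdeal.top_toLieSubalgebra, LieSubalgebra.top_toSubmodule, top_inf_eq] at this
  refine ⟨⟨P, lie_mem_radicalSum f hmono⟩, fun x hx y hy => hP.ge hy x hx,
    fun W hW hPW => le_antisymm (fun w hw => hP.le fun x hx => hW x (hPW hx) w hw) hPW⟩
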